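/- arXiv:1612.02684 — 7 statements merged into one kernel-verified Lean document; each statement's English description precedes it below -/
import Mathlib

section
/- There exist a concurrent epistemic game structure M, a state q of M, an agent a, and a set of states P ⊆ St such that q belongs to the least fixpoint of the monotone operator X ↦ P ∪ ⟨{a}⟩X, yet M,q ⊭ ⟨⟨{a}⟩⟩◇P. (Hence the naive fixpoint translation μZ.(φ ∨ ⟨A⟩Z) is not a lower bound for ⟨⟨A⟩⟩◇φ under imperfect information.) -/
/-- A concurrent epistemic game structure (iCGS). -/
structure CEGS where
  Agt : Type
  St : Type
  AP : Type
  Act : Type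
  agtFin : Finite Agt
  agtNe : Nonempty Agt
  stNe : Nonempty St
  actFin : Finite Act
  actNe : Nonempty Act
  V : AP → Set St
  d : Agt → St → Set Act
  d_ne : ∀ a q, (d a q).Nonempty
  o : St → (Agt → Act) → St
  sim : Agt → St → St → Prop
  sim_equiv : ∀ a, Equivalence (sim a)
  uniform : ∀ a q q', sim a q q' → d a q = d a q'

namespace CEGS

variable (M : CEGS)

/-- An action profile available at state `q`. -/
def Avail (q : M.St) (α : M.Agt → M.Act) : Prop := ∀ a, α a ∈ M.d a q

/-- A path: an infinite sequence of states, each next state being the outcome of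
some available action profile. -/
def IsPath (lam : ℕ → M.St) : Prop :=
  ∀ i, ∃ α, M.Avail (lam i) α ∧ lam (i + 1) = M.o (lam i) α

/-- `s` is a collective ir-strategy (uniform, memoryless) for coalition `A`. -/
def IsIrStrat (A : Set M.Agt) (s : M.Agt → M.St → M.Act) : Prop :=
  ∀ a ∈ A, (∀ q, s a q ∈ M.d a q) ∧ (∀ q q', M.sim a q q' → s a q = s a q')

/-- `s` is a collective Ir-strategy (perfect information, memoryless) for coalition `A`. -/
def IsIrStratPI (A : Set M.Agt) (s : M.Agt → M.St → M.Act) : Prop :=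
  ∀ a ∈ A, ∀ q, s a q ∈ M.d a q

/-- `lam ∈ out(q, s_A)`: a path starting at `q` along which every agent of `A` plays `s`. -/
def InOut (A : Set M.Agt) (s : M.Agt → M.St → M.Act) (q : M.St) (lam : ℕ → M.St) : Prop :=
  lam 0 = q ∧ ∀ i, ∃ α, M.Avail (lam i) α ∧ (∀ a ∈ A, α a = s a (lam i)) ∧
    lam (i + 1) = M.o (lam i) α

/-- `lam ∈ out^ir(q, s_A) = ⋃_{a∈A} ⋃_{q ∼_a q'} out(q', s_A)`. -/
def InOutIr (A : Set M.Agt) (s : M.Agt → M.St → M.Act) (q : M.St) (lam : ℕ → M.St) : Prop :=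
  ∃ a ∈ A, ∃ q', M.sim a q q' ∧ M.InOut A s q' lam

/-- The "everybody knows" relation `∼_A^E = ⋃_{a∈A} ∼_a`. -/
def simE (A : Set M.Agt) (q q' : M.St) : Prop := ∃ a ∈ A, M.sim a q q'

/-- The "common knowledge" relation `∼_A^C`: transitive closure of `∼_A^E`. -/
def simC (A : Set M.Agt) : M.St → M.St → Prop := Relation.TransGen (M.simE A)

/-- Individual knowledge: `K_a X`. -/
def Know (a : M.Agt) (X : Set M.St) : Set M.St := {q | ∀ q', M.sim a q q' → q' ∈ X}

/-- Mutual knowledge: `E_A X`. -/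
def EKnow (A : Set M.Agt) (X : Set M.St) : Set M.St := {q | ∀ q', M.simE A q q' → q' ∈ X}

/-- Common knowledge: `C_A X`. -/
def CKnow (A : Set M.Agt) (X : Set M.St) : Set M.St := {q | ∀ q', M.simC A q q' → q' ∈ X}

/-- Next-step operator `⟨A⟩X` (imperfect information). -/
def Next (A : Set M.Agt) (X : Set M.St) : Set M.St :=
  {q | ∃ s, M.IsIrStrat A s ∧ ∀ lam, M.InOutIr A s q lam → lam 1 ∈ X}

/-- `Reach_M(s_A, Q, X)`. -/
def ReachSet (A : Set M.Agt) (s : M.Agt → M.St → M.Act) (Q X : Set M.St) : Set M.St :=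
  {q | q ∈ Q ∧ ∀ lam, M.InOut A s q lam → ∃ i, lam i ∈ X ∧ ∀ j < i, lam j ∈ Q}

/-- Steadfast next-step operator `⟨A⟩•X`. -/
def NextStead (A : Set M.Agt) (X : Set M.St) : Set M.St :=
  {q | ∃ s, M.IsIrStrat A s ∧
    M.ReachSet A s {q' | M.simC A q q'} X = {q' | M.simC A q q'}}

/-- `M,q ⊨ ⟨⟨A⟩⟩◇P` (ATLir reachability, ir-strategies). -/
def CanReach (A : Set M.Agt) (P : Set M.St) (q : M.St) : Prop :=
  ∃ s, M.IsIrStrat A s ∧ ∀ lam, M.InOutIr A s q lam → ∃ i, lam i ∈ P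

/-- `M,q ⊨ ⟨⟨A⟩⟩□P` (ATLir safety, ir-strategies). -/
def CanGlobally (A : Set M.Agt) (P : Set M.St) (q : M.St) : Prop :=
  ∃ s, M.IsIrStrat A s ∧ ∀ lam, M.InOutIr A s q lam → ∀ i, lam i ∈ P

/-- `M,q ⊨ ⟨⟨A⟩⟩ S U P` (ATLir until, ir-strategies). -/
def CanUntil (A : Set M.Agt) (S P : Set M.St) (q : M.St) : Prop :=
  ∃ s, M.IsIrStrat A s ∧ ∀ lam, M.InOutIr A s q lam →
    ∃ i, lam i ∈ P ∧ ∀ j < i, lam j ∈ S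

/-- Perfect-information next-step operator `N^Ir_A(X)`. -/
def NextPI (A : Set M.Agt) (X : Set M.St) : Set M.St :=
  {q | ∃ t, M.IsIrStratPI A t ∧ ∀ lam, M.InOut A t q lam → lam 1 ∈ X}

/-- Perfect-information "globally" operator `G^Ir_A(X)`. -/
def GloballyPI (A : Set M.Agt) (X : Set M.St) : Set M.St :=
  {q | ∃ t, M.IsIrStratPI A t ∧ ∀ lam, M.InOut A t q lam → ∀ i, lam i ∈ X}

/-- Perfect-information "until" operator `U^Ir_A(Y, X)`. -/
def UntilPI (A : Set M.Agt) (Y X : Set M.St) : Set M.St :=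
  {q | ∃ t, M.IsIrStratPI A t ∧ ∀ lam, M.InOut A t q lam →
    ∃ i, lam i ∈ X ∧ ∀ j < i, lam j ∈ Y}

end CEGS

/-- Knaster–Tarski least fixpoint of a set operator. -/
def lfpSet {σ : Type} (f : Set σ → Set σ) : Set σ := sInf {X | f X ⊆ X}

/-- Knaster–Tarski greatest fixpoint of a set operator. -/
def gfpSet {σ : Type} (f : Set σ → Set σ) : Set σ := sSup {X | X ⊆ f X}

/-- the naive fixpoint translation `μZ.(P ∨ ⟨{a}⟩Z)` is not a lower bound
for `⟨⟨{a}⟩⟩◇P` under imperfect information. -/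
theorem naive_fixpoint_not_lower_bound :
    ∃ (M : CEGS) (q : M.St) (a : M.Agt) (P : Set M.St),
      q ∈ lfpSet (fun X => P ∪ M.Next {a} X) ∧ ¬ M.CanReach {a} P q := by
  refine ⟨⟨Unit, Bool, Unit, Unit, inferInstance, inferInstance, inferInstance, inferInstance,
    inferInstance, fun _ => ∅, fun _ _ => Set.univ, fun _ _ => ⟨(), trivial⟩,
    fun q _ => q, fun _ _ _ => True,
    fun _ => ⟨fun _ => trivial, fun {_ _} _ => trivial, fun {_ _ _} _ _ => trivial⟩,
    fun _ _ _ _ => rfl⟩, true, (), {true}, ?_, ?_⟩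
  · intro X hX
    exact hX (Or.inl rfl)
  · rintro ⟨s, -, h⟩
    obtain ⟨i, hi⟩ := h (fun _ => false)
      ⟨(), Set.mem_singleton _, false, trivial,
        rfl, fun i => ⟨fun _ => (), fun _ => trivial, fun _ _ => rfl, rfl⟩⟩
    simp at hi
end

section
/- There exist a concurrent epistemic game structure M, a state q of M, an agent a, and a set of states P ⊆ St such that M,q ⊨ ⟨⟨{a}⟩⟩◇P, yet q does not belong to the least fixpoint of the monotone operator X ↦ P ∪ ⟨{a}⟩X. (Hence the naive fixpoint translation μZ.(φ ∨ ⟨A⟩Z) is not an upper bound for ⟨⟨A⟩⟩◇φ either.) -/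
/-! The agent's single action makes every play from state `0` run `0 → 1 → 2 → 2 → ⋯`, so `{2}`
is reached from anywhere within two steps. But the agent cannot tell `0` from `1`, so the one-step
guarantee `⟨{a}⟩{2}` must also cover the play from `0`, whose next state is `1`: it fails at `0`
and `1`. Hence `{2}` is already a pre-fixpoint of `X ↦ {2} ∪ ⟨{a}⟩X` and the least fixpoint
misses `0`. -/

theorem lfpSet_subset_of_le {σ : Type} {f : Set σ → Set σ} {X : Set σ} (h : f X ⊆ X) :
    lfpSet f ⊆ X :=
  sInf_le h

namespace BlindChain

def step (q : Fin 3) : Fin 3 := if q = 0 then 1 else 2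

theorem step_step (q : Fin 3) : step (step q) = 2 := by
  fin_cases q <;> decide

/-- One agent, one action, transitions `0 → 1 → 2 → 2`; the agent only knows whether the state
is `2`. -/
abbrev model : CEGS where
  Agt := Unit
  St := Fin 3
  AP := Unit
  Act := Unit
  agtFin := inferInstance
  agtNe := inferInstance
  stNe := inferInstance
  actFin := inferInstance
  actNe := inferInstance
  V := fun _ => ∅
  d := fun _ _ => Set.univ
  d_ne := fun _ _ => Set.univ_nonempty
  o := fun q _ => step q
  sim := fun _ q q' => (q = 2 ↔ q' = 2)
  sim_equiv := fun _ => ⟨fun _ => Iff.rfl, Iff.symm, Iff.trans⟩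
  uniform := fun _ _ _ _ => rfl

theorem inOut_iff {A : Set model.Agt} {s : model.Agt → model.St → model.Act} {q : model.St}
    {lam : ℕ → model.St} : model.InOut A s q lam ↔ lam = fun i => step^[i] q := by
  constructor
  · rintro ⟨h0, hstep⟩
    funext i
    induction i with
    | zero => exact h0
    | succ n ih =>
      obtain ⟨_, -, -, hn⟩ := hstep n
      rw [Function.iterate_succ_apply', ← ih]
      exact hn
  · rintro rfl
    exact ⟨rfl, fun i => ⟨fun _ => (), fun _ => trivial, fun _ _ => rfl,
      Function.iterate_succ_apply' step i q⟩⟩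

theorem isIrStrat_unit (A : Set model.Agt) : model.IsIrStrat A fun _ _ => () :=
  fun _ _ => ⟨fun _ => trivial, fun _ _ _ => rfl⟩

theorem canReach_two (q : model.St) : model.CanReach {()} {2} q := by
  refine ⟨_, isIrStrat_unit _, ?_⟩
  rintro lam ⟨-, -, q', -, hout⟩
  rw [inOut_iff] at hout
  exact ⟨2, by rw [hout]; exact step_step q'⟩

theorem next_two_subset : model.Next {()} {2} ⊆ {2} := by
  rintro q ⟨s, -, hnext⟩
  by_contra hq
  have hsim : model.sim () q 0 := ⟨fun h => absurd h hq, fun h => absurd h (by decide)⟩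
  have hone : step (0 : Fin 3) ∈ ({2} : Set (Fin 3)) :=
    hnext _ ⟨(), rfl, 0, hsim, inOut_iff.mpr rfl⟩
  exact absurd hone (by decide)

end BlindChain

/-- the naive fixpoint translation `μZ.(P ∨ ⟨{a}⟩Z)` is not an upper bound
for `⟨⟨{a}⟩⟩◇P` either. -/
theorem naive_fixpoint_not_upper_bound :
    ∃ (M : CEGS) (q : M.St) (a : M.Agt) (P : Set M.St),
      M.CanReach {a} P q ∧ q ∉ lfpSet (fun X => P ∪ M.Next {a} X) := by
  refine ⟨BlindChain.model, 0, (), {2}, BlindChain.canReach_two _, fun hmem => ?_⟩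
  have hpre : lfpSet (fun X => {2} ∪ BlindChain.model.Next {()} X) ⊆ {2} :=
    lfpSet_subset_of_le (Set.union_subset subset_rfl BlindChain.next_two_subset)
  exact absurd (hpre hmem) (by decide)
end

section
/- For every concurrent epistemic game structure M, every agent a, every set of states P ⊆ St, and every state q: if q belongs to the least fixpoint of the monotone operator X ↦ K_a P ∪ ⟨{a}⟩X, then M,q ⊨ ⟨⟨{a}⟩⟩◇P. (Singleton-coalition case of the lower bound μZ.(E_A φ ∨ ⟨A⟩Z) for ⟨⟨A⟩⟩◇φ.) -/
/-!
Stratify the least fixpoint `L` of `F X = K_a P ∪ ⟨{a}⟩X` by the ordinal approximants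
`F^β(∅)` and let the rank of a state of `L` be the first stage at which it appears. A state of
`L` outside `K_a P` is in `⟨{a}⟩` of the states of strictly smaller rank. Every approximant
is closed under `∼_a`, so rank is constant on `∼_a`-classes and a single witnessing strategy can
be chosen per class; gluing these gives one uniform memoryless strategy along whose outcomes
the rank strictly decreases until `K_a P` (hence `P`) is reached.
-/

namespace OrdinalApprox

variable {σ : Type*} (f : Set σ →o Set σ)

theorem mem_lfpApprox_bot_iff {x : σ} {o : Ordinal} :
    x ∈ lfpApprox f ⊥ o ↔ ∃ b < o, x ∈ f (lfpApprox f ⊥ b) := by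
  rw [lfpApprox]
  simp

theorem lfpApprox_bot_subset_lfp (o : Ordinal) : lfpApprox f ⊥ o ⊆ f.lfp :=
  lfpApprox_le_of_mem_fixedPoints f f.isFixedPt_lfp bot_le o

/-- The stage at which `x` enters the least fixpoint (`0` if it never does). -/
noncomputable def lfpRank (x : σ) : Ordinal := sInf {o | x ∈ lfpApprox f ⊥ o}

theorem lfpRank_le {x : σ} {o : Ordinal} (hx : x ∈ lfpApprox f ⊥ o) : lfpRank f x ≤ o :=
  csInf_le' (s := {o : Ordinal | x ∈ lfpApprox f ⊥ o}) hx

theorem mem_lfpApprox_lfpRank {x : σ} (hx : x ∈ f.lfp) :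
    x ∈ lfpApprox f ⊥ (lfpRank f x) := by
  rw [← lfpApprox_ord_eq_lfp] at hx
  exact csInf_mem (s := {o : Ordinal | x ∈ lfpApprox f ⊥ o}) ⟨_, hx⟩

def lfpBelow (x : σ) : Set σ := {y | y ∈ f.lfp ∧ lfpRank f y < lfpRank f x}

theorem mem_apply_lfpBelow {x : σ} (hx : x ∈ f.lfp) : x ∈ f (lfpBelow f x) := by
  obtain ⟨b, hb, hxb⟩ := (mem_lfpApprox_bot_iff f).1 (mem_lfpApprox_lfpRank f hx)
  refine f.mono (fun y hy => ?_) hxb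
  exact ⟨lfpApprox_bot_subset_lfp f b hy, (lfpRank_le f hy).trans_lt hb⟩

section Saturated

variable {r : σ → σ → Prop} (hf : ∀ X x y, r x y → x ∈ f X → y ∈ f X)
include hf

theorem mem_lfpApprox_of_rel {x y : σ} (hxy : r x y) {o : Ordinal}
    (hx : x ∈ lfpApprox f ⊥ o) : y ∈ lfpApprox f ⊥ o := by
  obtain ⟨b, hb, hxb⟩ := (mem_lfpApprox_bot_iff f).1 hx
  exact (mem_lfpApprox_bot_iff f).2 ⟨b, hb, hf _ x y hxy hxb⟩

theorem mem_lfp_of_rel {x y : σ} (hxy : r x y) (hx : x ∈ f.lfp) : y ∈ f.lfp :=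
  lfpApprox_bot_subset_lfp f _ (mem_lfpApprox_of_rel f hf hxy (mem_lfpApprox_lfpRank f hx))

theorem lfpRank_le_of_rel {x y : σ} (hxy : r x y) (hx : x ∈ f.lfp) :
    lfpRank f y ≤ lfpRank f x :=
  lfpRank_le f (mem_lfpApprox_of_rel f hf hxy (mem_lfpApprox_lfpRank f hx))

theorem lfpBelow_eq_of_rel (hr : ∀ x y, r x y → r y x) {x y : σ} (hxy : r x y) (hx : x ∈ f.lfp) :
    lfpBelow f x = lfpBelow f y := by
  have hy := mem_lfp_of_rel f hf hxy hx
  rw [lfpBelow, lfpBelow,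
    (lfpRank_le_of_rel f hf hxy hx).antisymm (lfpRank_le_of_rel f hf (hr x y hxy) hy)]

end Saturated

end OrdinalApprox

namespace CEGS

variable (M : CEGS)

section Strategies

def simSetoid (a : M.Agt) : Setoid M.St := ⟨M.sim a, M.sim_equiv a⟩

noncomputable def rep (a : M.Agt) (q : M.St) : M.St := (Quotient.mk (M.simSetoid a) q).out

theorem sim_rep (a : M.Agt) (q : M.St) : M.sim a (M.rep a q) q :=
  Quotient.mk_out (s := M.simSetoid a) q

theorem rep_eq_rep {a : M.Agt} {q q' : M.St} (h : M.sim a q q') : M.rep a q = M.rep a q' :=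
  congrArg Quotient.out (Quotient.sound (s := M.simSetoid a) h)

theorem exists_isIrStrat (A : Set M.Agt) : ∃ s, M.IsIrStrat A s := by
  refine ⟨fun b q => (M.d_ne b (M.rep b q)).some,
    fun b _ => ⟨fun q => ?_, fun q q' h => ?_⟩⟩
  · rw [← M.uniform b _ _ (M.sim_rep b q)]
    exact (M.d_ne b (M.rep b q)).some_mem
  · simp only [M.rep_eq_rep h]

noncomputable def patch (a : M.Agt) (ts : M.St → M.Agt → M.St → M.Act) :
    M.Agt → M.St → M.Act :=
  fun _ q => ts (M.rep a q) a q

theorem isIrStrat_patch {a : M.Agt} {ts : M.St → M.Agt → M.St → M.Act}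
    (hts : ∀ r, M.IsIrStrat {a} (ts r)) : M.IsIrStrat {a} (M.patch a ts) := by
  rintro b rfl
  refine ⟨fun q => (hts _ b rfl).1 q, fun q q' h => ?_⟩
  simp only [patch, M.rep_eq_rep h]
  exact (hts _ b rfl).2 q q' h

end Strategies

section Outcomes

variable {M} {A : Set M.Agt} {s : M.Agt → M.St → M.Act}

theorem exists_inOut (hs : ∀ b ∈ A, ∀ q, s b q ∈ M.d b q) (q : M.St) :
    ∃ lam, M.InOut A s q lam := by
  classical
  let prof : M.St → M.Agt → M.Act := fun x b => if b ∈ A then s b x else (M.d_ne b x).some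
  have hprof : ∀ x, M.Avail x (prof x) := fun x b => by
    by_cases hb : b ∈ A
    · simpa [prof, hb] using hs b hb x
    · simpa [prof, hb] using (M.d_ne b x).some_mem
  refine ⟨fun n => (fun x => M.o x (prof x))^[n] q, rfl, fun i => ⟨prof _, hprof _, ?_, ?_⟩⟩
  · intro b hb
    simp [prof, hb]
  · exact Function.iterate_succ_apply' _ _ _

theorem exists_inOut_of_avail (hs : ∀ b ∈ A, ∀ q, s b q ∈ M.d b q) {q : M.St}
    {α : M.Agt → M.Act} (hα : M.Avail q α) (hαs : ∀ b ∈ A, α b = s b q) :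
    ∃ lam, M.InOut A s q lam ∧ lam 1 = M.o q α := by
  obtain ⟨μ, hμ0, hμ⟩ := exists_inOut hs (M.o q α)
  refine ⟨fun | 0 => q | n + 1 => μ n, ⟨rfl, ?_⟩, hμ0⟩
  rintro (_ | i)
  · exact ⟨α, hα, hαs, hμ0⟩
  · exact hμ i

theorem InOut.tail {q : M.St} {lam : ℕ → M.St} (h : M.InOut A s q lam) :
    M.InOut A s (lam 1) (fun i => lam (i + 1)) :=
  ⟨rfl, fun i => h.2 (i + 1)⟩

end Outcomes

section Saturation

variable {M} {a : M.Agt}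

theorem mem_know_of_sim {X : Set M.St} {q q' : M.St} (h : M.sim a q q')
    (hq : q ∈ M.Know a X) : q' ∈ M.Know a X :=
  fun q'' h' => hq q'' ((M.sim_equiv a).trans h h')

theorem mem_next_singleton_of_sim {X : Set M.St} {q q' : M.St} (h : M.sim a q q')
    (hq : q ∈ M.Next {a} X) : q' ∈ M.Next {a} X := by
  obtain ⟨s, hs, hX⟩ := hq
  refine ⟨s, hs, ?_⟩
  rintro lam ⟨b, rfl, q'', h', hout⟩
  exact hX lam ⟨b, rfl, q'', (M.sim_equiv b).trans h h', hout⟩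

end Saturation

theorem next_mono (A : Set M.Agt) : Monotone (M.Next A) :=
  fun _ _ hXY _ ⟨s, hs, hX⟩ => ⟨s, hs, fun lam h => hXY (hX lam h)⟩

section Reachability

open OrdinalApprox

variable (a : M.Agt) (P : Set M.St)

def reachOp : Set M.St →o Set M.St :=
  ⟨fun X => M.Know a P ∪ M.Next {a} X,
    fun _ _ hXY => Set.union_subset_union_right _ (M.next_mono {a} hXY)⟩

theorem sim_mem_reachOp (X : Set M.St) (x y : M.St) (h : M.sim a x y)
    (hx : x ∈ M.reachOp a P X) : y ∈ M.reachOp a P X :=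
  hx.imp (mem_know_of_sim h) (mem_next_singleton_of_sim h)

theorem exists_stepStrat (x : M.St) : ∃ t, M.IsIrStrat {a} t ∧
    (x ∈ (M.reachOp a P).lfp → x ∉ M.Know a P →
      ∀ lam, M.InOutIr {a} t x lam → lam 1 ∈ lfpBelow (M.reachOp a P) x) := by
  by_cases hx : x ∈ (M.reachOp a P).lfp ∧ x ∉ M.Know a P
  · obtain ⟨t, ht, hstep⟩ := (mem_apply_lfpBelow _ hx.1).resolve_left hx.2
    exact ⟨t, ht, fun _ _ => hstep⟩
  · obtain ⟨t, ht⟩ := M.exists_isIrStrat {a}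
    exact ⟨t, ht, fun h1 h2 => absurd ⟨h1, h2⟩ hx⟩

noncomputable def stepStrat (x : M.St) : M.Agt → M.St → M.Act :=
  (M.exists_stepStrat a P x).choose

noncomputable def reachStrat : M.Agt → M.St → M.Act := M.patch a (M.stepStrat a P)

theorem isIrStrat_reachStrat : M.IsIrStrat {a} (M.reachStrat a P) :=
  M.isIrStrat_patch fun r => (M.exists_stepStrat a P r).choose_spec.1

theorem reachStrat_step {x : M.St} (hx : x ∈ (M.reachOp a P).lfp) (hK : x ∉ M.Know a P)
    {lam : ℕ → M.St} (h : M.InOut {a} (M.reachStrat a P) x lam) :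
    lam 1 ∈ lfpBelow (M.reachOp a P) x := by
  have hsat := M.sim_mem_reachOp a P
  obtain ⟨rfl, hstep⟩ := h
  set r := M.rep a (lam 0)
  have hr : M.sim a r (lam 0) := M.sim_rep a _
  have hrL : r ∈ (M.reachOp a P).lfp := mem_lfp_of_rel _ hsat ((M.sim_equiv a).symm hr) hx
  obtain ⟨ht, hdesc⟩ := (M.exists_stepStrat a P r).choose_spec
  -- the first move of `lam` is also a first move of `stepStrat r` from `lam 0 ∼_a r`
  obtain ⟨α, hα, hαs, hlam1⟩ := hstep 0
  obtain ⟨μ, hμ, hμ1⟩ :=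
    exists_inOut_of_avail (fun b hb => (ht b hb).1) hα (by rintro b rfl; exact hαs b rfl)
  have hbelow := hdesc hrL (fun hK' => hK (mem_know_of_sim hr hK')) μ ⟨a, rfl, _, hr, hμ⟩
  rwa [hμ1, ← hlam1, lfpBelow_eq_of_rel _ hsat (fun _ _ => (M.sim_equiv a).symm) hr hrL]
    at hbelow

theorem reachStrat_reaches {x : M.St} (hx : x ∈ (M.reachOp a P).lfp) {lam : ℕ → M.St}
    (h : M.InOut {a} (M.reachStrat a P) x lam) : ∃ i, lam i ∈ P := by
  by_cases hK : x ∈ M.Know a P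
  · exact ⟨0, h.1 ▸ hK x ((M.sim_equiv a).refl x)⟩
  · have h1 := M.reachStrat_step a P hx hK h
    obtain ⟨i, hi⟩ := reachStrat_reaches h1.1 h.tail
    exact ⟨i + 1, hi⟩
termination_by lfpRank (M.reachOp a P) x
decreasing_by exact h1.2

end Reachability

end CEGS

/-- singleton-coalition lower bound: `μX.(K_a P ∪ ⟨{a}⟩X)` implies
`⟨⟨{a}⟩⟩◇P`. -/
theorem singleton_fixpoint_lower_bound (M : CEGS) (a : M.Agt) (P : Set M.St) (q : M.St)
    (h : q ∈ lfpSet (fun X => M.Know a P ∪ M.Next {a} X)) :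
    M.CanReach {a} P q := by
  refine ⟨M.reachStrat a P, M.isIrStrat_reachStrat a P, ?_⟩
  rintro lam ⟨b, rfl, q', hqq', hout⟩
  have hq' : q' ∈ (M.reachOp b P).lfp :=
    OrdinalApprox.mem_lfp_of_rel _ (M.sim_mem_reachOp b P) hqq' h
  exact M.reachStrat_reaches b P hq' hout
end

section
/- For every n ≥ 2 there exist a concurrent epistemic game structure M, a coalition A with |A| = n, a set of states P ⊆ St, and a state q such that M,q ⊨ ⟨⟨A⟩⟩◇P, yet q does not belong to the least fixpoint of the monotone operator X ↦ E_A P ∪ ⟨A⟩X. (For coalitions of size greater than one, ⟨⟨A⟩⟩◇φ does not imply the fixpoint μZ.(E_A φ ∨ ⟨A⟩Z) either.) -/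
abbrev MyCtr (n : ℕ) [NeZero n] : CEGS where
  Agt := Fin n
  St := Bool
  AP := Unit
  Act := Unit
  agtFin := inferInstance
  agtNe := inferInstance
  stNe := inferInstance
  actFin := inferInstance
  actNe := inferInstance
  V := fun _ => ∅
  d := fun _ _ => Set.univ
  d_ne := fun _ _ => ⟨(), trivial⟩
  o := fun _ _ => false
  sim := fun _ _ _ => True
  sim_equiv := fun _ => ⟨fun _ => trivial, fun _ => trivial, fun _ _ => trivial⟩
  uniform := fun _ _ _ _ => rfl

/-- for every coalition size `n ≥ 2`, `⟨⟨A⟩⟩◇P` does not imply the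
fixpoint `μX.(E_A P ∪ ⟨A⟩X)` either. -/
theorem big_coalition_fixpoint_not_upper_bound (n : ℕ) (hn : 2 ≤ n) :
    ∃ (M : CEGS) (A : Set M.Agt) (P : Set M.St) (q : M.St),
      A.ncard = n ∧
      M.CanReach A P q ∧
      q ∉ lfpSet (fun X => M.EKnow A P ∪ M.Next A X) := by
  haveI : NeZero n := ⟨by omega⟩
  refine ⟨MyCtr n, Set.univ, {false}, false, ?_, ?_, ?_⟩
  · simp [Set.ncard_univ]
  · refine ⟨fun _ _ => (), fun a _ => ⟨fun _ => trivial, fun _ _ _ => rfl⟩, ?_⟩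
    intro lam hlam
    obtain ⟨a, _, q', _, _, hstep⟩ := hlam
    obtain ⟨α, _, _, h⟩ := hstep 0
    exact ⟨1, h⟩
  · intro hmem
    have hpre : (MyCtr n).EKnow Set.univ {false} ∪ (MyCtr n).Next Set.univ ∅ ⊆
        (∅ : Set Bool) := by
      intro x hx
      rcases hx with hx | hx
      · have := hx true ⟨(0 : Fin n), trivial, trivial⟩
        simp [Set.mem_singleton_iff] at this
      · obtain ⟨s, _, hall⟩ := hx
        exact hall (fun _ => false)
          ⟨(0 : Fin n), trivial, false, trivial, rfl,
            fun i => ⟨fun a => s a false, fun _ => trivial, fun a _ => rfl, rfl⟩⟩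
    exact absurd (hmem ∅ hpre) (Set.notMem_empty false)
end

section
/- For every concurrent epistemic game structure M, every agent a, every set of states P ⊆ St, and every state q: if q belongs to the least fixpoint of X ↦ K_a P ∪ ⟨{a}⟩X, then q belongs to the least fixpoint of X ↦ K_a P ∪ ⟨{a}⟩•X. (For singleton coalitions, the steadfast fixpoint translation provides a tighter lower approximation than the ordinary next-step fixpoint translation.) -/
/-- for singleton coalitions, the ordinary fixpoint translation implies
the steadfast one. -/
theorem steadfast_fixpoint_tighter (M : CEGS) (a : M.Agt) (P : Set M.St) (q : M.St)
    (h : q ∈ lfpSet (fun X => M.Know a P ∪ M.Next {a} X)) :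
    q ∈ lfpSet (fun X => M.Know a P ∪ M.NextStead {a} X) := by
  have key : ∀ X : Set M.St, M.Next {a} X ⊆ M.NextStead {a} X := by
    intro X p hp
    obtain ⟨s, hs, hout⟩ := hp
    refine ⟨s, hs, ?_⟩
    have hsim : ∀ p', M.simC {a} p p' → M.sim a p p' := by
      intro p' hh
      induction hh with
      | single h1 =>
        obtain ⟨b, hb, hs'⟩ := h1
        rw [show b = a from hb] at hs'
        exact hs'
      | tail _ h1 ih =>
        obtain ⟨b, hb, hs'⟩ := h1
        rw [show b = a from hb] at hs'
        exact (M.sim_equiv a).trans ih hs'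
    ext p'
    simp only [CEGS.ReachSet, Set.mem_setOf_eq]
    constructor
    · rintro ⟨h1, _⟩; exact h1
    · intro hp'
      refine ⟨hp', fun lam hlam => ⟨1, ?_, ?_⟩⟩
      · exact hout lam ⟨a, rfl, p', hsim p' hp', hlam⟩
      · intro j hj
        interval_cases j
        show M.simC {a} p (lam 0)
        rw [hlam.1]; exact hp'
  intro Y hY
  simp only [Set.mem_setOf_eq] at hY
  exact h Y (fun x hx => hY (hx.imp_right (fun hx' => key Y hx')))
end

section
/- There exist a concurrent epistemic game structure M, an agent a, a set of states P ⊆ St, and a state q such that q belongs to the least fixpoint of X ↦ K_a P ∪ ⟨{a}⟩•X but q does not belong to the least fixpoint of X ↦ K_a P ∪ ⟨{a}⟩X. (The steadfast fixpoint approximation is strictly tighter than the ordinary one for singleton coalitions.) -/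
lemma mem_lfpSet {σ : Type} {f : Set σ → Set σ} {q : σ} :
    q ∈ lfpSet f ↔ ∀ X, f X ⊆ X → q ∈ X := by
  simp only [lfpSet, Set.sInf_eq_sInter, Set.mem_sInter, Set.mem_setOf_eq]

namespace Ctr

def step : Fin 3 → Fin 3 := ![2, 0, 2]

abbrev M : CEGS where
  Agt := Unit
  St := Fin 3
  AP := Unit
  Act := Unit
  agtFin := inferInstance
  agtNe := inferInstance
  stNe := inferInstance
  actFin := inferInstance
  actNe := inferInstance
  V := fun _ => ∅
  d := fun _ _ => Set.univ
  d_ne := fun _ _ => ⟨(), trivial⟩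
  o := fun q _ => step q
  sim := fun _ q q' => (q = 2 ↔ q' = 2)
  sim_equiv := fun _ => ⟨fun _ => Iff.rfl, Iff.symm, Iff.trans⟩
  uniform := fun _ _ _ _ => rfl

lemma inOut_eq {A : Set M.Agt} {s : M.Agt → M.St → M.Act} {q : M.St} {lam : ℕ → M.St}
    (h : M.InOut A s q lam) : ∀ i, lam i = step^[i] q := by
  intro i
  induction i with
  | zero => exact h.1
  | succ n ih =>
    obtain ⟨α, _, _, h3⟩ := h.2 n
    rw [Function.iterate_succ_apply', ← ih]
    exact h3

lemma inOut_path (A : Set M.Agt) (s : M.Agt → M.St → M.Act) (q : M.St) :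
    M.InOut A s q (fun n => step^[n] q) := by
  refine ⟨rfl, fun i => ⟨fun _ => (), fun _ => trivial, fun a _ => rfl, ?_⟩⟩
  show step^[i + 1] q = step (step^[i] q)
  exact Function.iterate_succ_apply' step i q

lemma simC_char {a : M.Agt} {q q' : M.St} (h : M.simC {a} q q') : (q = 2 ↔ q' = 2) := by
  induction h with
  | single h => obtain ⟨_, _, hs⟩ := h; exact hs
  | tail _ h ih => obtain ⟨_, _, hs⟩ := h; exact ih.trans hs

lemma simC_01 (a : M.Agt) : M.simC {a} 0 1 :=
  Relation.TransGen.single ⟨a, rfl, by show ((0:Fin 3) = 2 ↔ (1:Fin 3) = 2); decide⟩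

lemma simC_00 (a : M.Agt) : M.simC {a} 0 0 :=
  Relation.TransGen.single ⟨a, rfl, Iff.rfl⟩

end Ctr

/-- the steadfast fixpoint approximation is strictly tighter than the
ordinary one for singleton coalitions. -/
theorem steadfast_fixpoint_strictly_tighter :
    ∃ (M : CEGS) (a : M.Agt) (P : Set M.St) (q : M.St),
      q ∈ lfpSet (fun X => M.Know a P ∪ M.NextStead {a} X) ∧
      q ∉ lfpSet (fun X => M.Know a P ∪ M.Next {a} X) := by
  classical
  refine ⟨Ctr.M, (), {2}, 0, ?_, ?_⟩
  · -- steadfast lfp contains 0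
    rw [mem_lfpSet]
    intro X hX
    have h2X : (2 : Ctr.M.St) ∈ X := by
      apply hX
      left
      intro q' hq'
      exact hq'.mp rfl
    apply hX
    right
    refine ⟨fun _ _ => (), fun a _ => ⟨fun _ => trivial, fun _ _ _ => rfl⟩, ?_⟩
    ext q'
    constructor
    · exact fun h => h.1
    · intro hq'
      refine ⟨hq', fun lam hlam => ?_⟩
      have hiter := Ctr.inOut_eq hlam
      have hq'2 : q' ≠ 2 := fun h =>
        absurd ((Ctr.simC_char hq').mpr h) (by decide)
      have : q' = 0 ∨ q' = 1 :=
        (by decide : ∀ x : Fin 3, x ≠ 2 → x = 0 ∨ x = 1) q' hq'2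
      rcases this with h0 | h1
      · refine ⟨1, ?_, ?_⟩
        · rw [hiter 1, h0]; exact h2X
        · intro j hj
          interval_cases j
          rw [hiter 0, h0]
          exact Ctr.simC_00 ()
      · refine ⟨2, ?_, ?_⟩
        · rw [hiter 2, h1]; exact h2X
        · intro j hj
          interval_cases j
          · rw [hiter 0, h1]; exact Ctr.simC_01 ()
          · rw [hiter 1, h1]
            show Ctr.M.simC {()} 0 (Ctr.step 1)
            exact Ctr.simC_00 ()
  · -- ordinary lfp does not contain 0
    intro hmem
    rw [mem_lfpSet] at hmem
    have h0 : (0 : Ctr.M.St) ∈ ({2} : Set Ctr.M.St) := by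
      apply hmem {2}
      intro q hq
      rcases hq with hq | hq
      · exact hq q Iff.rfl
      · obtain ⟨s, _, hlam⟩ := hq
        by_contra hq2
        have hq2' : q ≠ 2 := fun h => hq2 h
        have hsim : Ctr.M.sim () q 1 := by
          constructor
          · intro h; exact absurd h hq2'
          · intro h; exact absurd h (by decide)
        have := hlam (fun n => Ctr.step^[n] 1)
          ⟨(), rfl, 1, hsim, Ctr.inOut_path {()} s 1⟩
        simp only [Function.iterate_one] at this
        exact absurd this (by decide)
    exact absurd h0 (by decide)
end

section
/- For every concurrent epistemic game structure M, every agent a, and every set of states X ⊆ St: ⟨{a}⟩X ⊆ ⟨{a}⟩•X, i.e., if there is an ir-strategy s_a for a with λ[1] ∈ X for every λ ∈ out^ir(q,s_a), then q ∈ ⟨{a}⟩•X. (One-step imperfect-information ability of a single agent implies steadfast next-step ability; this holds only for single-agent coalitions.) -/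
/-- one-step imperfect-information ability of a single agent implies
steadfast next-step ability: `⟨{a}⟩X ⊆ ⟨{a}⟩•X`. -/
theorem singleton_next_subset_steadfast (M : CEGS) (a : M.Agt) (X : Set M.St) :
    M.Next {a} X ⊆ M.NextStead {a} X := by
  rintro q ⟨s, hs, hnext⟩
  have hsimC : ∀ q q', M.simC {a} q q' → M.sim a q q' := by
    intro q q' h
    induction h with
    | single h => obtain ⟨b, hb, h⟩ := h; cases hb; exact h
    | tail _ h ih =>
      obtain ⟨b, hb, h⟩ := h; cases hb
      exact (M.sim_equiv a).trans ih h
  refine ⟨s, hs, Set.Subset.antisymm (fun q' hq' => hq'.1) ?_⟩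
  intro q' hq'
  refine ⟨hq', fun lam hlam => ⟨1, ?_, ?_⟩⟩
  · exact hnext lam ⟨a, rfl, q', hsimC q q' hq', hlam⟩
  · intro j hj
    interval_cases j
    simpa [hlam.1] using hq'
end
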